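/- arXiv:2603.28329 — 4 statements merged into one kernel-verified Lean document; each statement's English description precedes it below -/
import Mathlib

section
/- PAC individual rationality: for every winner index i with 1 ≤ i ≤ k, the PAC payment satisfies min(B/k, v_{k+1}/(n−k)) ≥ v_i/(n−k); that is, under the PAC feasibility condition, every winner's payment is at least its privacy cost c(v_i, 1/(n−k)), so every winner's utility p − c(v_i, ε) is nonnegative. -/
/-- PAC individual rationality: under the PAC feasibility condition
`v k / (n - k) ≤ B / k`, every winner `i` (with `1 ≤ i ≤ k`) receives a payment
`min (B/k) (v (k+1) / (n-k))` that is at least its privacy cost `v i / (n-k)`,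
hence every winner's utility is nonnegative. -/
theorem pac_individual_rationality
    (n k : ℕ) (hk : 1 ≤ k) (hkn : k < n)
    (B : ℝ) (hB : 0 < B)
    (v : ℕ → ℝ)
    (hnn : ∀ i, 1 ≤ i → i ≤ n → 0 ≤ v i)
    (hmono : ∀ i j, 1 ≤ i → i ≤ j → j ≤ n → v i ≤ v j)
    (hfeas : v k / ((n : ℝ) - k) ≤ B / k) :
    ∀ i, 1 ≤ i → i ≤ k →
      min (B / k) (v (k + 1) / ((n : ℝ) - k)) ≥ v i / ((n : ℝ) - k) := by
  intro i hi hik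
  have hnk : (0:ℝ) < (n:ℝ) - k := by
    have : (k:ℝ) < n := by exact_mod_cast hkn
    linarith
  have hik' : v i ≤ v k := hmono i k hi hik (le_of_lt hkn)
  have hik1 : v i ≤ v (k+1) := hmono i (k+1) hi (hik.trans (Nat.le_succ k)) hkn
  have h1 : v i / ((n:ℝ) - k) ≤ B / k := by
    refine le_trans ?_ hfeas
    gcongr
  have h2 : v i / ((n:ℝ) - k) ≤ v (k+1) / ((n:ℝ) - k) := by gcongr
  exact le_min h1 h2
end

section
/- Dominant-strategy incentive compatibility of the fixed-k PAC mechanism (Theorem 1, DSIC part): assume the truthful report profile is the sorted valuation profile v and assume the PAC feasibility condition v_k/(n−k) ≤ B/k. Then for every client i and every nonnegative misreport r′, the client's utility under the unilateral deviation profile (r′, v_{−i}) is at most its utility under the truthful profile v: u_i(r′, v_{−i}) ≤ u_i(v). In particular, truthful reporting is a dominant strategy. -/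
open Classical

/-- The `j`-th smallest report (0-indexed) of a report profile `r : Fin n → ℝ`:
the entry at index `j` of the list sorting the multiset of reports nondecreasingly. -/
noncomputable def orderStat (n : ℕ) (r : Fin n → ℝ) (j : ℕ) : ℝ :=
  ((Finset.univ.val.map r).sort (· ≤ ·)).getD j 0

/-- Client `i` is a winner of the fixed-`k` PAC mechanism on report profile `r` iff
the number of indices `j` with `r j < r i`, or with `r j = r i` and `j ≤ i`, is at
most `k` (i.e. `i` is among the `k` smallest reports, ties broken by lower index). -/
noncomputable def isWinner (n k : ℕ) (r : Fin n → ℝ) (i : Fin n) : Prop :=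
  (Finset.univ.filter (fun j : Fin n => r j < r i ∨ (r j = r i ∧ j ≤ i))).card ≤ k

/-- Utility of client `i` with true valuation `vi` under report profile `r` in the
fixed-`k` PAC mechanism with budget `B`: a winner is paid
`min (B/k) (r_(k+1) / (n-k))` and incurs privacy cost `vi / (n-k)`; a loser gets `0`.
(The `(k+1)`-th smallest report is `orderStat n r k` with 0-based indexing.) -/
noncomputable def utilPAC (n k : ℕ) (B : ℝ) (vi : ℝ) (r : Fin n → ℝ) (i : Fin n) : ℝ :=
  if isWinner n k r i then
    min (B / k) (orderStat n r k / ((n : ℝ) - k)) - vi / ((n : ℝ) - k)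
  else 0

/-!
Under the sorted truthful profile client `i` wins iff `i < k`, and then its utility
`min (B/k) (v_k/(n-k)) - v_i/(n-k)` is nonnegative by feasibility (`v_k` is the `(k+1)`-th
smallest value, 0-indexed). If a misreport makes `i` a winner, fewer than `k` reports lie strictly
below its own, so for `m = max i k` the `m ≥ k` other clients `j ≤ m`, which report `v_j ≤ v_m`,
push `i`'s report, and hence the `(k+1)`-th smallest report, below `v_m`. A truthful winner
therefore cannot raise its payment, and a truthful loser is paid at most its cost `v_i/(n-k)`.
-/

theorem List.Pairwise.getElem_le_of_lt_countP {α : Type*} [LinearOrder α] {l : List α}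
    (hl : l.Pairwise (· ≤ ·)) {k : ℕ} (hk : k < l.length) {c : α}
    (hc : k < l.countP (· ≤ c)) : l[k] ≤ c := by
  by_contra! hlt
  have hdrop : (l.drop k).countP (· ≤ c) = 0 := by
    refine List.countP_eq_zero.2 fun x hx => ?_
    obtain ⟨j, hj, rfl⟩ := List.mem_drop_iff_getElem.1 hx
    have hkj : l[k] ≤ l[k + j] := by
      rcases Nat.eq_zero_or_pos j with rfl | hj0
      · exact le_rfl
      · exact List.pairwise_iff_getElem.1 hl _ _ hk (by omega) (by omega)
    simpa using hlt.trans_le hkj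
  have htake : (l.take k).countP (· ≤ c) ≤ k :=
    List.countP_le_length.trans (List.length_take_le _ _)
  rw [← List.take_append_drop k l, List.countP_append, hdrop] at hc
  omega

theorem orderStat_le_of_lt_card {n : ℕ} {r : Fin n → ℝ} {k : ℕ} {c : ℝ}
    (hc : k < (Finset.univ.filter (fun j => r j ≤ c)).card) : orderStat n r k ≤ c := by
  set l := (Finset.univ.val.map r).sort (· ≤ ·)
  have hcount : l.countP (· ≤ c) = (Finset.univ.filter (fun j => r j ≤ c)).card := by
    rw [← Multiset.coe_countP, Multiset.sort_eq, Multiset.countP_map, Finset.card,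
      Finset.filter_val]
  have hk : k < l.length := (hcount ▸ hc).trans_le List.countP_le_length
  rw [orderStat, List.getD_eq_getElem _ _ hk]
  exact (Multiset.pairwise_sort _ _).getElem_le_of_lt_countP hk (hcount ▸ hc)

theorem orderStat_of_monotone {n : ℕ} {v : Fin n → ℝ} (hv : Monotone v) {j : ℕ} (hj : j < n) :
    orderStat n v j = v ⟨j, hj⟩ := by
  have hsort : (Finset.univ.val.map v).sort (· ≤ ·) = List.ofFn v := by
    rw [Fin.univ_val_map, Multiset.coe_sort]
    exact List.mergeSort_eq_self _ (List.pairwise_ofFn.2 fun _ _ h => hv h.le)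
  rw [orderStat, hsort, List.getD_eq_getElem _ _ (by simpa), List.getElem_ofFn]

theorem card_filter_lt_lt_of_isWinner {n k : ℕ} {r : Fin n → ℝ} {i : Fin n}
    (hi : isWinner n k r i) : (Finset.univ.filter (fun j => r j < r i)).card < k := by
  have hsub : insert i (Finset.univ.filter (fun j => r j < r i)) ⊆
      Finset.univ.filter (fun j => r j < r i ∨ (r j = r i ∧ j ≤ i)) := by
    intro j hj
    rcases Finset.mem_insert.1 hj with rfl | hj
    · simp
    · simp_all
  have := Finset.card_le_card hsub
  rw [Finset.card_insert_of_notMem (by simp)] at this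
  exact Nat.lt_of_succ_le (this.trans hi)

theorem orderStat_le_of_isWinner {n k : ℕ} {r : Fin n → ℝ} {i : Fin n} {c : ℝ}
    (hi : isWinner n k r i) (hc : k ≤ ((Finset.univ.filter (fun j => r j ≤ c)).erase i).card) :
    orderStat n r k ≤ c := by
  have hric : r i ≤ c := by
    by_contra! hcr
    have hsub : (Finset.univ.filter (fun j => r j ≤ c)).erase i ⊆
        Finset.univ.filter (fun j => r j < r i) := fun j hj => by
      simp only [Finset.mem_erase, Finset.mem_filter, Finset.mem_univ, true_and] at hj ⊢
      exact hj.2.trans_lt hcr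
    exact (hc.trans (Finset.card_le_card hsub)).not_gt (card_filter_lt_lt_of_isWinner hi)
  apply orderStat_le_of_lt_card
  rw [← Finset.card_erase_add_one (Finset.mem_filter.2 ⟨Finset.mem_univ i, hric⟩)]
  omega

theorem winnerSet_eq_Iic_of_monotone {n : ℕ} {v : Fin n → ℝ} (hv : Monotone v) (i : Fin n) :
    Finset.univ.filter (fun j => v j < v i ∨ (v j = v i ∧ j ≤ i)) = Finset.Iic i := by
  ext j
  simp only [Finset.mem_filter, Finset.mem_univ, true_and, Finset.mem_Iic]
  constructor
  · rintro (hlt | ⟨-, hle⟩)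
    · exact (hv.reflect_lt hlt).le
    · exact hle
  · intro hji
    exact (hv hji).lt_or_eq.imp_right fun h => ⟨h, hji⟩

theorem isWinner_iff_of_monotone {n k : ℕ} {v : Fin n → ℝ} (hv : Monotone v) (i : Fin n) :
    isWinner n k v i ↔ (i : ℕ) < k := by
  rw [isWinner, winnerSet_eq_Iic_of_monotone hv, Fin.card_Iic]
  omega

theorem orderStat_update_le_of_isWinner {n k : ℕ} {v : Fin n → ℝ} (hv : Monotone v)
    {i m : Fin n} {r' : ℝ} (him : i ≤ m) (hkm : k ≤ m)
    (hwin : isWinner n k (Function.update v i r') i) :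
    orderStat n (Function.update v i r') k ≤ v m := by
  have hsub : (Finset.Iic m).erase i ⊆
      (Finset.univ.filter (fun j => Function.update v i r' j ≤ v m)).erase i := fun j hj => by
    obtain ⟨hji, hjm⟩ := Finset.mem_erase.1 hj
    simpa [hji, Function.update_of_ne hji] using hv (Finset.mem_Iic.1 hjm)
  refine orderStat_le_of_isWinner hwin (le_trans ?_ (Finset.card_le_card hsub))
  rw [Finset.card_erase_of_mem (Finset.mem_Iic.2 him), Fin.card_Iic]
  omega

theorem utilPAC_self_nonneg {n k : ℕ} (hkn : k < n) (B : ℝ) {v : Fin n → ℝ} (hv : Monotone v)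
    (hfeas : v ⟨k - 1, (k.sub_le 1).trans_lt hkn⟩ / ((n : ℝ) - k) ≤ B / k) (i : Fin n) :
    0 ≤ utilPAC n k B (v i) v i := by
  have hnk : (0 : ℝ) < n - k := sub_pos.2 (by exact_mod_cast hkn)
  rw [utilPAC]
  split_ifs with hi
  · rw [isWinner_iff_of_monotone hv] at hi
    have hB : v i / ((n : ℝ) - k) ≤ B / k :=
      le_trans (by gcongr; exact hv (Fin.le_def.2 (by simp; omega))) hfeas
    have hvk : v i / ((n : ℝ) - k) ≤ orderStat n v k / ((n : ℝ) - k) := by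
      rw [orderStat_of_monotone hv hkn]
      gcongr
      exact hv (Fin.le_def.2 (by simp; omega))
    linarith [le_min hB hvk]
  · exact le_rfl

/-- DSIC of the fixed-`k` PAC mechanism: if the truthful profile is the sorted
nonnegative valuation profile `v` and the PAC feasibility condition
`v k / (n-k) ≤ B/k` holds, then for every client `i` and every nonnegative
misreport `r'`, the utility under the unilateral deviation `(r', v_{-i})` is at
most the utility under truthful reporting; truthful reporting is dominant. -/
theorem pac_dsic
    (n k : ℕ) (hkn : k < n)
    (B : ℝ)
    (v : Fin n → ℝ) (hmono : Monotone v)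
    (hfeas : v ⟨k - 1, by omega⟩ / ((n : ℝ) - k) ≤ B / k) :
    ∀ (i : Fin n) (r' : ℝ), 0 ≤ r' →
      utilPAC n k B (v i) (Function.update v i r') i ≤ utilPAC n k B (v i) v i := by
  intro i r' _
  have hnk : (0 : ℝ) < n - k := sub_pos.2 (by exact_mod_cast hkn)
  by_cases hwin : isWinner n k (Function.update v i r') i
  swap
  · rw [utilPAC, if_neg hwin]
    exact utilPAC_self_nonneg hkn B hmono hfeas i
  rw [utilPAC, if_pos hwin, utilPAC]
  by_cases hi : (i : ℕ) < k
  · rw [if_pos ((isWinner_iff_of_monotone hmono i).2 hi), orderStat_of_monotone hmono hkn]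
    have hstat := orderStat_update_le_of_isWinner hmono (m := ⟨k, hkn⟩)
      (Fin.le_def.2 (by simp; omega)) le_rfl hwin
    gcongr
  · rw [if_neg (mt (isWinner_iff_of_monotone hmono i).1 hi)]
    have hstat := orderStat_update_le_of_isWinner hmono le_rfl (not_lt.1 hi) hwin
    have hpay : orderStat n (Function.update v i r') k / ((n : ℝ) - k) ≤ v i / ((n : ℝ) - k) := by
      gcongr
    linarith [min_le_right (B / k) (orderStat n (Function.update v i r') k / ((n : ℝ) - k))]
end

section
/- Bayesian-Nash equilibrium of the fixed-k PAC mechanism (Theorem 1): let μ be a probability measure over opponents' truthful valuation profiles such that for μ-almost every profile the PAC feasibility condition holds and the utility functions are integrable. Then for every client i with true valuation v_i and every nonnegative misreport r′, the expected utility of truthful reporting weakly dominates the expected utility of misreporting: ∫ u_i(v_i, b_{−i}) dμ(b_{−i}) ≥ ∫ u_i(r′, b_{−i}) dμ(b_{−i}). -/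
open Classical MeasureTheory

/-! Fix the other clients' reports and let `T` be the `k`-th smallest of them. Client `i` wins
with report `x` only if `x ≤ T` and loses only if `T ≤ x`, and whenever it wins the `(k+1)`-st
smallest report of the whole profile is `T`, so it is paid `min (B/k) (T/(n-k))` whatever it
reported. A report therefore only decides whether `i` wins at this fixed price. Truthful reporting
wins when `v ≤ T`, where the price covers the cost `v/(n-k)` (its cap `B/k` by feasibility), and
loses when `T ≤ v`, where winning would not pay. So truthfulness is optimal for every realization
of the others' valuations, and integrating gives the claim. -/

theorem List.Pairwise.countP_le_iff_not {α : Type*} {R : α → α → Prop} {s : List α}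
    (hs : s.Pairwise R) {p : α → Bool} (hp : ∀ a b, R a b → p b → p a) {j : ℕ}
    (hj : j < s.length) : s.countP p ≤ j ↔ ¬ p s[j] := by
  induction s generalizing j with
  | nil => simp at hj
  | cons a s ih =>
    obtain ⟨has, hs⟩ := List.pairwise_cons.1 hs
    rw [List.countP_cons]
    by_cases hpa : p a
    · cases j with
      | zero => simp [hpa]
      | succ j => simpa [hpa] using ih hs (by simpa using hj)
    · have hzero : s.countP p = 0 :=
        List.countP_eq_zero.2 fun b hb hpb => hpa (hp a b (has b hb) hpb)
      refine iff_of_true (by simp [hpa, hzero]) ?_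
      cases j with
      | zero => simpa using hpa
      | succ j => exact fun hpb => hpa (hp a _ (has _ (List.getElem_mem _)) hpb)

namespace Multiset
variable {α : Type*} [LinearOrder α] {m : Multiset α} {j : ℕ}

theorem le_sort_getD_iff (hj : j < card m) (d c : α) :
    c ≤ (m.sort (· ≤ ·)).getD j d ↔ m.countP (· < c) ≤ j := by
  have hj' : j < (m.sort (· ≤ ·)).length := by rwa [length_sort]
  conv_rhs => rw [← sort_eq m (· ≤ ·), coe_countP]
  rw [List.getD_eq_getElem _ _ hj', (pairwise_sort m _).countP_le_iff_not
    (fun a b hab hb => by simpa using hab.trans_lt (by simpa using hb)) hj']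
  simp

theorem sort_getD_le_iff (hj : j < card m) (d c : α) :
    (m.sort (· ≤ ·)).getD j d ≤ c ↔ j < m.countP (· ≤ c) := by
  have hj' : j < (m.sort (· ≤ ·)).length := by rwa [length_sort]
  conv_rhs => rw [← sort_eq m (· ≤ ·), coe_countP]
  rw [← not_iff_not, not_le, not_lt, List.getD_eq_getElem _ _ hj',
    (pairwise_sort m _).countP_le_iff_not
      (fun a b hab hb => by simpa using hab.trans (by simpa using hb)) hj']
  simp

theorem sort_cons_getD_succ {x : α} (hj : j < card m) (hx : m.countP (· < x) ≤ j) (d : α) :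
    ((x ::ₘ m).sort (· ≤ ·)).getD (j + 1) d = (m.sort (· ≤ ·)).getD j d := by
  refine eq_of_forall_le_iff fun c => ?_
  rw [le_sort_getD_iff (by simpa using hj), le_sort_getD_iff hj, countP_cons]
  by_cases hxc : x < c
  · simp only [hxc, if_true]
    omega
  · have hcx : m.countP (· < c) ≤ m.countP (· < x) := by
      rw [countP_eq_card_filter, countP_eq_card_filter]
      exact card_le_card (monotone_filter_right m fun a hac => hac.trans_le (not_lt.1 hxc))
    simp only [hxc, if_false]
    omega

end Multiset

namespace PAC

open Finset Function

variable {n k : ℕ}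

noncomputable def others (b : Fin n → ℝ) (i : Fin n) : Multiset ℝ :=
  (univ.val.erase i).map b

noncomputable def threshold (k : ℕ) (b : Fin n → ℝ) (i : Fin n) : ℝ :=
  ((others b i).sort (· ≤ ·)).getD (k - 1) 0

section
variable (b : Fin n → ℝ) (i : Fin n) (x : ℝ)

lemma card_others : Multiset.card (others b i) = n - 1 := by
  simp [others, Multiset.card_erase_of_mem]

lemma map_update_eq_cons : univ.val.map (update b i x) = x ::ₘ others b i := by
  conv_lhs => rw [← Multiset.cons_erase (mem_univ_val i)]
  rw [Multiset.map_cons, update_self]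
  refine congrArg _ (Multiset.map_congr rfl fun j hj => update_of_ne ?_ _ _)
  exact ((univ : Finset (Fin n)).nodup.mem_erase_iff.1 hj).1

lemma card_filter_update (p : ℝ → Prop) [DecidablePred p] :
    #{j | p (update b i x j)} = (others b i).countP p + if p x then 1 else 0 := by
  rw [card_def, filter_val, ← Multiset.countP_map, map_update_eq_cons, Multiset.countP_cons]

end

variable {b : Fin n → ℝ} {i : Fin n} {x : ℝ}

lemma countP_others_lt_of_isWinner (hw : isWinner n k (update b i x) i) :
    (others b i).countP (· < x) < k := by
  simp only [isWinner, update_self] at hw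
  have hsub : insert i ({j | update b i x j < x} : Finset (Fin n)) ⊆
      ({j | update b i x j < x ∨ (update b i x j = x ∧ j ≤ i)} : Finset (Fin n)) :=
    insert_subset (by simp) (monotone_filter_right _ fun _ _ => Or.inl)
  have := (card_le_card hsub).trans hw
  rw [card_insert_of_notMem (by simp), card_filter_update b i x (· < x)] at this
  simpa using this

lemma le_countP_others_of_not_isWinner (hl : ¬ isWinner n k (update b i x) i) :
    k ≤ (others b i).countP (· ≤ x) := by
  simp only [isWinner, update_self, not_le] at hl
  have hsub : ({j | update b i x j < x ∨ (update b i x j = x ∧ j ≤ i)} : Finset (Fin n)) ⊆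
      ({j | update b i x j ≤ x} : Finset (Fin n)) :=
    monotone_filter_right _ fun _ _ h => h.elim le_of_lt fun h => h.1.le
  have := hl.trans_le (card_le_card hsub)
  rw [card_filter_update b i x (· ≤ x)] at this
  simp only [le_refl, if_true] at this
  omega

lemma le_threshold_of_isWinner (hkn : k < n) (hw : isWinner n k (update b i x) i) :
    x ≤ threshold k b i := by
  have := countP_others_lt_of_isWinner hw
  exact (Multiset.le_sort_getD_iff (by rw [card_others]; omega) 0 x).2 (by omega)

lemma threshold_le_of_not_isWinner (hk : 1 ≤ k) (hkn : k < n)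
    (hl : ¬ isWinner n k (update b i x) i) : threshold k b i ≤ x := by
  have := le_countP_others_of_not_isWinner hl
  exact (Multiset.sort_getD_le_iff (by rw [card_others]; omega) 0 x).2 (by omega)

lemma le_orderStat_update_of_isWinner (hkn : k < n) (hw : isWinner n k (update b i x) i) :
    x ≤ orderStat n (update b i x) (k - 1) := by
  have := countP_others_lt_of_isWinner hw
  rw [orderStat, map_update_eq_cons, Multiset.le_sort_getD_iff (by simp [card_others]; omega),
    Multiset.countP_cons]
  simp only [lt_irrefl, if_false]
  omega

lemma orderStat_update_of_isWinner (hk : 1 ≤ k) (hkn : k < n)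
    (hw : isWinner n k (update b i x) i) : orderStat n (update b i x) k = threshold k b i := by
  have := countP_others_lt_of_isWinner hw
  obtain ⟨j, rfl⟩ := Nat.exists_eq_add_of_le' hk
  rw [orderStat, map_update_eq_cons, threshold, Nat.add_sub_cancel]
  exact Multiset.sort_cons_getD_succ (by rw [card_others]; omega) (by omega) 0

lemma utilPAC_update (hk : 1 ≤ k) (hkn : k < n) (B v : ℝ) :
    utilPAC n k B v (update b i x) i = if isWinner n k (update b i x) i then
      min (B / k) (threshold k b i / ((n : ℝ) - k)) - v / ((n : ℝ) - k) else 0 := by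
  rw [utilPAC]
  split_ifs with hw
  · rw [orderStat_update_of_isWinner hk hkn hw]
  · rfl

theorem utilPAC_update_le_truthful (hk : 1 ≤ k) (hkn : k < n) {B v : ℝ} (r : ℝ)
    (hfeas : orderStat n (update b i v) (k - 1) / ((n : ℝ) - k) ≤ B / k) :
    utilPAC n k B v (update b i r) i ≤ utilPAC n k B v (update b i v) i := by
  have hnk : (0 : ℝ) < n - k := sub_pos.2 (by exact_mod_cast hkn)
  rw [utilPAC_update hk hkn, utilPAC_update hk hkn]
  by_cases hwv : isWinner n k (update b i v) i
  · have : v / (n - k) ≤ min (B / k) (threshold k b i / (n - k)) :=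
      le_min ((div_le_div_of_nonneg_right (le_orderStat_update_of_isWinner hkn hwv) hnk.le).trans
        hfeas) (div_le_div_of_nonneg_right (le_threshold_of_isWinner hkn hwv) hnk.le)
    split_ifs <;> linarith
  · have : min (B / k) (threshold k b i / (n - k)) ≤ v / (n - k) := (min_le_right _ _).trans
      (div_le_div_of_nonneg_right (threshold_le_of_not_isWinner hk hkn hwv) hnk.le)
    split_ifs <;> linarith

end PAC

theorem pac_bayesian_nash_general
    (n k : ℕ) (hk : 1 ≤ k) (hkn : k < n)
    (B : ℝ)
    (i : Fin n) (vi : ℝ)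
    (μ : Measure (Fin n → ℝ))
    (hfeas : ∀ᵐ b ∂μ,
      orderStat n (Function.update b i vi) (k - 1) / ((n : ℝ) - k) ≤ B / k)
    (hint_truth : Integrable (fun b => utilPAC n k B vi (Function.update b i vi) i) μ) :
    ∀ r' : ℝ, 0 ≤ r' →
      Integrable (fun b => utilPAC n k B vi (Function.update b i r') i) μ →
      ∫ b, utilPAC n k B vi (Function.update b i r') i ∂μ ≤
        ∫ b, utilPAC n k B vi (Function.update b i vi) i ∂μ := by
  intro r' _ hint_mis
  refine integral_mono_ae hint_mis hint_truth ?_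
  filter_upwards [hfeas] with b hb
  exact PAC.utilPAC_update_le_truthful hk hkn r' hb

/-- Bayesian-Nash equilibrium of the fixed-`k` PAC mechanism: let `μ` be a
probability measure over opponents' truthful valuation profiles (a profile `b`
contributes the coordinates `b j`, `j ≠ i`; coordinate `i` is replaced by the
report of client `i`).  If for `μ`-almost every realization the PAC feasibility
condition holds (the `k`-th smallest valuation `w_k` of the realized truthful
profile satisfies `w_k/(n-k) ≤ B/k`) and the utility functions are integrable,
then for client `i` with true valuation `vi` and every nonnegative misreport `r'`,
the expected utility of truthful reporting weakly dominates that of misreporting. -/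
theorem pac_bayesian_nash
    (n k : ℕ) (hk : 1 ≤ k) (hkn : k < n)
    (B : ℝ) (hB : 0 < B)
    (i : Fin n) (vi : ℝ) (hvi : 0 ≤ vi)
    (μ : Measure (Fin n → ℝ)) [IsProbabilityMeasure μ]
    (hfeas : ∀ᵐ b ∂μ,
      orderStat n (Function.update b i vi) (k - 1) / ((n : ℝ) - k) ≤ B / k)
    (hint_truth : Integrable (fun b => utilPAC n k B vi (Function.update b i vi) i) μ) :
    ∀ r' : ℝ, 0 ≤ r' →
      Integrable (fun b => utilPAC n k B vi (Function.update b i r') i) μ →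
      ∫ b, utilPAC n k B vi (Function.update b i r') i ∂μ ≤
        ∫ b, utilPAC n k B vi (Function.update b i vi) i ∂μ :=
  pac_bayesian_nash_general n k hk hkn B i vi μ hfeas hint_truth
end

section
/- Payment invariance under winner underbidding (DSIC case (i) of the PAC mechanism): in the fixed-k PAC mechanism with truthful sorted profile v satisfying v_k/(n−k) ≤ B/k, if a winner i (1 ≤ i ≤ k) unilaterally deviates to any report r′ with 0 ≤ r′ ≤ v_i, then in the deviation profile (r′, v_{−i}) client i remains a winner, the (k+1)-th smallest report is still v_{k+1}, and hence its payment min(B/k, v_{k+1}/(n−k)) and its utility are unchanged from the truthful outcome. -/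
open Classical

/-!
An order statistic is pinned down by counting: `orderStat n r j = y` as soon as at most `j`
reports lie strictly below `y` and more than `j` lie at or below it. When winner `i < k` lowers
its report, the reports below `v k` still all come from clients before `k`, and the reports at
or below `v k` still include those of all clients up to `k`; so the `(k+1)`-th smallest report
is still `v k`. No client after `i` undercuts `i`, so `i` stays a winner, and its payment and
utility are unchanged.
-/

open Finset

theorem List.Pairwise.getElem_mem_iff_lt_countP {α : Type*} [Preorder α] {l : List α}
    (hl : l.Pairwise (· ≤ ·)) {s : Set α} (hs : IsLowerSet s) {j : ℕ} (hj : j < l.length) :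
    l[j] ∈ s ↔ j < l.countP (· ∈ s) := by
  induction l generalizing j with
  | nil => simp at hj
  | cons a t ih =>
    obtain ⟨ha, ht⟩ := List.pairwise_cons.1 hl
    by_cases has : a ∈ s
    · cases j with
      | zero => simp [has]
      | succ j => simp [has, ih ht (by simpa using hj)]
    · have hnot : ∀ b ∈ a :: t, b ∉ s := by
        rintro b hb hbs
        rcases List.mem_cons.1 hb with rfl | hb
        exacts [has hbs, has (hs (ha b hb) hbs)]
      have hzero : (a :: t).countP (· ∈ s) = 0 :=
        List.countP_eq_zero.2 fun b hb => by simpa using hnot b hb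
      simp [hzero, hnot _ (List.getElem_mem hj)]

theorem orderStat_mem_iff {n : ℕ} (r : Fin n → ℝ) {s : Set ℝ} (hs : IsLowerSet s) {j : ℕ}
    (hj : j < n) : orderStat n r j ∈ s ↔ j < #{a | r a ∈ s} := by
  have hlen : j < ((Finset.univ.val.map r).sort (· ≤ ·)).length := by simpa using hj
  rw [orderStat, List.getD_eq_getElem _ _ hlen,
    (Multiset.pairwise_sort _ _).getElem_mem_iff_lt_countP hs hlen, ← Multiset.coe_countP,
    Multiset.sort_eq, Multiset.countP_map, Finset.card_def, Finset.filter_val]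

theorem orderStat_eq_of_card_lt_le {n : ℕ} (r : Fin n → ℝ) {j : ℕ} {y : ℝ}
    (hlt : #{a | r a < y} ≤ j) (hle : j < #{a | r a ≤ y}) : orderStat n r j = y := by
  have hj : j < n := hle.trans_le ((Finset.card_filter_le _ _).trans_eq (by simp))
  apply le_antisymm
  · exact (orderStat_mem_iff r (isLowerSet_Iic y) hj).2 hle
  · exact not_lt.1 fun h => ((orderStat_mem_iff r (isLowerSet_Iio y) hj).1 h).not_ge hlt

theorem isWinner_of_forall_lt_le {n k : ℕ} {r : Fin n → ℝ} {i : Fin n} (hik : (i : ℕ) < k)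
    (h : ∀ j, i < j → r i ≤ r j) : isWinner n k r i := by
  have hsub : univ.filter (fun j => r j < r i ∨ (r j = r i ∧ j ≤ i)) ⊆ Iic i := by
    intro j hj
    simp only [mem_filter, mem_univ, true_and] at hj
    by_contra hji
    have hij := lt_of_not_ge (mem_Iic.not.1 hji)
    rcases hj with hlt | ⟨-, hle⟩
    exacts [(h j hij).not_gt hlt, hij.not_ge hle]
  calc _ ≤ #(Iic i) := card_le_card hsub
    _ = i + 1 := Fin.card_Iic i
    _ ≤ k := hik

theorem orderStat_update_of_le {n k : ℕ} (hkn : k < n) {v : Fin n → ℝ} (hmono : Monotone v)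
    {i : Fin n} (hi : (i : ℕ) < k) {r' : ℝ} (hr : r' ≤ v i) :
    orderStat n (Function.update v i r') k = v ⟨k, hkn⟩ := by
  set w := Function.update v i r'
  set m : Fin n := ⟨k, hkn⟩
  have hw : ∀ a, w a ≤ v a := fun a => by
    rcases eq_or_ne a i with rfl | ha
    · simpa [w] using hr
    · simp [w, ha]
  apply orderStat_eq_of_card_lt_le
  · have hsub : univ.filter (fun a => w a < v m) ⊆ Iio m := by
      intro a ha
      simp only [mem_filter, mem_univ, true_and] at ha
      by_contra ham
      have hma := not_lt.1 (mem_Iio.not.1 ham)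
      have hai : a ≠ i := ((show i < m from hi).trans_le hma).ne'
      simp only [w, Function.update_of_ne hai] at ha
      exact (hmono hma).not_gt ha
    calc _ ≤ #(Iio m) := card_le_card hsub
      _ = k := Fin.card_Iio m
  · have hsub : Iic m ⊆ univ.filter (fun a => w a ≤ v m) := by
      intro a ha
      simp only [mem_filter, mem_univ, true_and]
      exact (hw a).trans (hmono (mem_Iic.1 ha))
    calc k < #(Iic m) := by simp [m]
      _ ≤ _ := card_le_card hsub

/-- Payment invariance under winner underbidding (DSIC case (i) of the PAC
mechanism): with truthful sorted profile `v` satisfying the feasibility condition,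
if a winner `i` (0-based index `i < k`) deviates to any report `0 ≤ r' ≤ v i`,
then `i` remains a winner, the `(k+1)`-th smallest report is still `v (k+1)`
(0-based index `k`), and hence its payment and its utility are unchanged. -/
theorem pac_winner_underbid_invariance
    (n k : ℕ) (hkn : k < n)
    (B : ℝ)
    (v : Fin n → ℝ) (hmono : Monotone v)
    (i : Fin n) (hi : (i : ℕ) < k)
    (r' : ℝ) (hr : r' ≤ v i) :
    isWinner n k (Function.update v i r') i ∧
    orderStat n (Function.update v i r') k = v ⟨k, hkn⟩ ∧
    min (B / k) (orderStat n (Function.update v i r') k / ((n : ℝ) - k)) =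
      min (B / k) (orderStat n v k / ((n : ℝ) - k)) ∧
    utilPAC n k B (v i) (Function.update v i r') i = utilPAC n k B (v i) v i := by
  have hwin : isWinner n k (Function.update v i r') i := by
    refine isWinner_of_forall_lt_le hi fun j hij => ?_
    simpa [Function.update_of_ne hij.ne'] using hr.trans (hmono hij.le)
  have hwin_truthful : isWinner n k v i :=
    isWinner_of_forall_lt_le hi fun j hij => hmono hij.le
  have hstat := orderStat_update_of_le hkn hmono hi hr
  have hstat_truthful : orderStat n v k = v ⟨k, hkn⟩ := by
    simpa using orderStat_update_of_le hkn hmono hi le_rfl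
  refine ⟨hwin, hstat, by rw [hstat, hstat_truthful], ?_⟩
  rw [utilPAC, utilPAC, if_pos hwin, if_pos hwin_truthful, hstat, hstat_truthful]
end
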